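/- arXiv:1511.01381 — 8 statements merged into one kernel-verified Lean document; each statement's English description precedes it below -/
import Mathlib

section
/- Let G be a group, θ an involutive automorphism of G, H = G^θ, σ(g) = θ(g)⁻¹, s(g) = g·σ(g) and s̄(g) = σ(g)·g. Then for g ∈ G, the double coset HgH is stable under σ (i.e. σ(HgH) = HgH) if and only if s(g) and s̄(g) are conjugate by an element of H. -/
/-- For an involution `θ` of `G`, with `H = G^θ`, `σ(g) = θ(g)⁻¹`, `s(g) = g·σ(g)`,
`s̄(g) = σ(g)·g`: the double coset `HgH` is stable under `σ` iff `s(g)` and `s̄(g)`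
are conjugate by an element of `H`. -/
theorem stmt_3 {G : Type*} [Group G] (θ : G ≃* G) (hθ : ∀ g, θ (θ g) = g) (g : G) :
    (fun x => (θ x)⁻¹) '' {x : G | ∃ h₁ h₂ : G, θ h₁ = h₁ ∧ θ h₂ = h₂ ∧ x = h₁ * g * h₂}
      = {x : G | ∃ h₁ h₂ : G, θ h₁ = h₁ ∧ θ h₂ = h₂ ∧ x = h₁ * g * h₂} ↔
    ∃ h : G, θ h = h ∧ h * (g * (θ g)⁻¹) * h⁻¹ = (θ g)⁻¹ * g := by
  constructor
  · intro hst
    have hg : g ∈ {x : G | ∃ h₁ h₂ : G, θ h₁ = h₁ ∧ θ h₂ = h₂ ∧ x = h₁ * g * h₂} :=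
      ⟨1, 1, map_one θ, map_one θ, by group⟩
    have hσ : (θ g)⁻¹ ∈ {x : G | ∃ h₁ h₂ : G, θ h₁ = h₁ ∧ θ h₂ = h₂ ∧ x = h₁ * g * h₂} := by
      rw [← hst]; exact ⟨g, hg, rfl⟩
    obtain ⟨h₁, h₂, e₁, e₂, heq⟩ := hσ
    have h2 : g⁻¹ = h₁ * θ g * h₂ := by
      have := congrArg θ heq
      simpa [e₁, e₂, hθ] using this
    have h3 : (θ g)⁻¹ = h₂ * g * h₁ := by
      have : θ g = h₁⁻¹ * g⁻¹ * h₂⁻¹ := by rw [h2]; group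
      rw [this]; group
    refine ⟨h₁, e₁, ?_⟩
    conv_lhs => rw [h3]
    rw [heq]
    group
  · rintro ⟨h, eh, hc⟩
    set k : G := (θ g)⁻¹ * h⁻¹ * g⁻¹ with hk
    have hc2 : h * g * (θ g)⁻¹ = (θ g)⁻¹ * g * h := by
      have := congrArg (· * h) hc
      simpa [mul_assoc] using this
    have hσg : (θ g)⁻¹ = h * g * k := by
      rw [hk, show h * g * ((θ g)⁻¹ * h⁻¹ * g⁻¹) = (h * g * (θ g)⁻¹) * h⁻¹ * g⁻¹ from by group,
        hc2]
      group
    have ek : θ k = k := by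
      have hθk : θ k = g⁻¹ * h⁻¹ * (θ g)⁻¹ := by
        simp [hk, map_mul, map_inv, eh, hθ]
      have key : θ g * h * g = g * h * θ g := by
        have := congrArg (fun x => θ g * x * θ g) hc2
        simpa [mul_assoc] using this
      rw [hθk, hk]
      calc g⁻¹ * h⁻¹ * (θ g)⁻¹ = (θ g * h * g)⁻¹ := by group
        _ = (g * h * θ g)⁻¹ := by rw [key]
        _ = (θ g)⁻¹ * h⁻¹ * g⁻¹ := by group
    have hclosed : ∀ x ∈ {x : G | ∃ h₁ h₂ : G, θ h₁ = h₁ ∧ θ h₂ = h₂ ∧ x = h₁ * g * h₂},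
        (θ x)⁻¹ ∈ {x : G | ∃ h₁ h₂ : G, θ h₁ = h₁ ∧ θ h₂ = h₂ ∧ x = h₁ * g * h₂} := by
      rintro x ⟨h₁, h₂, e₁, e₂, rfl⟩
      refine ⟨h₂⁻¹ * h, k * h₁⁻¹, by simp [map_mul, map_inv, e₂, eh],
        by simp [map_mul, map_inv, e₁, ek], ?_⟩
      have : (θ (h₁ * g * h₂))⁻¹ = h₂⁻¹ * (θ g)⁻¹ * h₁⁻¹ := by
        simp [map_mul, e₁, e₂, mul_assoc]
      rw [this, hσg]; group
    ext x
    constructor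
    · rintro ⟨y, hy, rfl⟩
      exact hclosed y hy
    · intro hx
      refine ⟨(θ x)⁻¹, hclosed x hx, ?_⟩
      simp [map_inv, hθ]
end

section
/- Let G be a group, θ an involutive automorphism, σ(g) = θ(g)⁻¹, s(g) = g·σ(g), and let r = s(g) for some g ∈ G. Then the double coset HgH is σ-stable if and only if r is the symmetrization of some element of the centralizer Z_G(r), i.e. there exists z ∈ G with z·r = r·z and z·σ(z) = r. -/
private lemma stmt4_helper {G : Type*} [Group G] (g a h₁ h₂ : G)
    (e1 : a = h₁ * g * h₂) (e2 : a = h₂ * g * h₁) :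
    g * h₁ * (g * a) = g * a * (g * h₁) := by
  calc g * h₁ * (g * a) = g * (h₁ * g * h₂) * (h₂⁻¹ * a) := by group
    _ = g * a * (h₂⁻¹ * a) := by rw [← e1]
    _ = g * a * (h₂⁻¹ * (h₂ * g * h₁)) := by rw [← e2]
    _ = g * a * (g * h₁) := by group

/-- For an involution `θ` of `G` with `H = G^θ`, `σ(g) = θ(g)⁻¹` and `r = s(g) = g·σ(g)`:
the double coset `HgH` is `σ`-stable iff `r` is the symmetrization of an element of the
centralizer `Z_G(r)`, i.e. there is `z` with `z·r = r·z` and `z·σ(z) = r`. -/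
theorem stmt_4 {G : Type*} [Group G] (θ : G ≃* G) (hθ : ∀ g, θ (θ g) = g)
    (g r : G) (hr : r = g * (θ g)⁻¹) :
    (fun x => (θ x)⁻¹) '' {x : G | ∃ h₁ h₂ : G, θ h₁ = h₁ ∧ θ h₂ = h₂ ∧ x = h₁ * g * h₂}
      = {x : G | ∃ h₁ h₂ : G, θ h₁ = h₁ ∧ θ h₂ = h₂ ∧ x = h₁ * g * h₂} ↔
    ∃ z : G, z * r = r * z ∧ z * (θ z)⁻¹ = r := by
  subst hr
  have hσσ : ∀ x : G, (θ (θ x)⁻¹)⁻¹ = x := fun x => by rw [map_inv, inv_inv, hθ]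
  constructor
  · intro hset
    have hg : g ∈ {x : G | ∃ h₁ h₂ : G, θ h₁ = h₁ ∧ θ h₂ = h₂ ∧ x = h₁ * g * h₂} :=
      ⟨1, 1, map_one θ, map_one θ, by group⟩
    have hσg : (θ g)⁻¹ ∈ {x : G | ∃ h₁ h₂ : G, θ h₁ = h₁ ∧ θ h₂ = h₂ ∧ x = h₁ * g * h₂} := by
      rw [← hset]; exact Set.mem_image_of_mem _ hg
    obtain ⟨h₁, h₂, e1, e2, heq⟩ := hσg
    have heq2 : (θ g)⁻¹ = h₂ * g * h₁ := by
      have h := congrArg θ heq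
      rw [map_inv, hθ, map_mul, map_mul, e1, e2] at h
      have h3 : θ g = h₁⁻¹ * g⁻¹ * h₂⁻¹ := by rw [h]; group
      rw [h3]; group
    refine ⟨g * h₁, ?_, ?_⟩
    · exact stmt4_helper g (θ g)⁻¹ h₁ h₂ heq heq2
    · rw [map_mul, e1]; group
  · rintro ⟨z, hc, hs⟩
    have hθz : θ z = θ g * g⁻¹ * z := by
      have h1 : (θ z)⁻¹ = z⁻¹ * (g * (θ g)⁻¹) := by rw [← hs]; group
      calc θ z = ((θ z)⁻¹)⁻¹ := (inv_inv _).symm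
        _ = (z⁻¹ * (g * (θ g)⁻¹))⁻¹ := by rw [h1]
        _ = θ g * g⁻¹ * z := by group
    have hcc : Commute z (g * (θ g)⁻¹) := hc
    have hc' : z⁻¹ * (g * (θ g)⁻¹) = g * (θ g)⁻¹ * z⁻¹ := hcc.inv_left
    have hσg : (θ g)⁻¹ ∈ {x : G | ∃ h₁ h₂ : G, θ h₁ = h₁ ∧ θ h₂ = h₂ ∧ x = h₁ * g * h₂} := by
      refine ⟨g⁻¹ * z, (θ g)⁻¹ * z⁻¹, ?_, ?_, ?_⟩
      · rw [map_mul, map_inv, hθz]; group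
      · rw [map_mul, map_inv, map_inv, hθ, hθz]
        calc g⁻¹ * (θ g * g⁻¹ * z)⁻¹ = g⁻¹ * (z⁻¹ * (g * (θ g)⁻¹)) := by group
          _ = g⁻¹ * (g * (θ g)⁻¹ * z⁻¹) := by rw [hc']
          _ = (θ g)⁻¹ * z⁻¹ := by group
      · calc (θ g)⁻¹ = g⁻¹ * (g * (θ g)⁻¹ * z) * z⁻¹ := by group
          _ = g⁻¹ * (z * (g * (θ g)⁻¹)) * z⁻¹ := by rw [hc]
          _ = g⁻¹ * z * g * ((θ g)⁻¹ * z⁻¹) := by group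
    obtain ⟨k₁, k₂, f1, f2, feq⟩ := hσg
    have sub : ∀ x ∈ {x : G | ∃ h₁ h₂ : G, θ h₁ = h₁ ∧ θ h₂ = h₂ ∧ x = h₁ * g * h₂},
        (θ x)⁻¹ ∈ {x : G | ∃ h₁ h₂ : G, θ h₁ = h₁ ∧ θ h₂ = h₂ ∧ x = h₁ * g * h₂} := by
      rintro x ⟨a, b, ha, hb, rfl⟩
      refine ⟨b⁻¹ * k₁, k₂ * a⁻¹, ?_, ?_, ?_⟩
      · rw [map_mul, map_inv, hb, f1]
      · rw [map_mul, map_inv, f2, ha]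
      · calc (θ (a * g * b))⁻¹ = b⁻¹ * (θ g)⁻¹ * a⁻¹ := by rw [map_mul, map_mul, ha, hb]; group
          _ = b⁻¹ * (k₁ * g * k₂) * a⁻¹ := by rw [feq]
          _ = b⁻¹ * k₁ * g * (k₂ * a⁻¹) := by group
    ext x
    constructor
    · rintro ⟨y, hy, rfl⟩
      exact sub y hy
    · intro hx
      exact ⟨(θ x)⁻¹, sub x hx, hσσ x⟩
end

section
/- Let V be a finite-dimensional vector space over a field F of characteristic 0, and let r, h ∈ GL(V) with h² = Id and h·r·h⁻¹ = r⁻¹, with r semisimple. Then dim V₁(h) − dim V₁(rh) = dim(V₋₁(r) ∩ V₁(h)) − dim(V₋₁(r) ∩ V₋₁(h)), where V_λ(x) denotes the λ-eigenspace of x. -/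
/-!
Put `A = h` and `B = r h`. Both are involutions, `r = B A`, and `S = A + B` intertwines them in
both directions: `S A = B S` and `S B = A S`. Hence `S` maps `V₁(A)` into `V₁(B)` and back, its
kernel is `V₋₁(r)`, and on that kernel `B = -A`. Semisimplicity of `r` makes `ker S` and
`range S` independent, and then rank–nullity applied to `S` on `V₁(A)` and on `V₁(B)` gives the
identity.
-/

open Module LinearMap

section RankNullity

variable {K V W : Type*} [Field K] [AddCommGroup V] [Module K V] [AddCommGroup W] [Module K W]
  [FiniteDimensional K V]

theorem Submodule.finrank_map_add_finrank_ker_inf (f : V →ₗ[K] W) (p : Submodule K V) :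
    finrank K (p.map f) + finrank K (ker f ⊓ p : Submodule K V) = finrank K p := by
  rw [← (Submodule.comapSubtypeEquivOfLe inf_le_right).finrank_eq, Submodule.comap_inf,
    Submodule.comap_subtype_self, inf_top_eq, ← ker_domRestrict, ← range_domRestrict,
    finrank_range_add_finrank_ker]

theorem LinearMap.finrank_map_add_finrank_ker_inf_le {f : Module.End K V}
    (hf : Disjoint (range f) (ker f)) {p q : Submodule K V} (hpq : p.map f ≤ q) :
    finrank K (p.map f) + finrank K (ker f ⊓ q : Submodule K V) ≤ finrank K q := by
  have hbot : p.map f ⊓ (ker f ⊓ q) = ⊥ := (hf.mono map_le_range inf_le_left).eq_bot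
  rw [← Submodule.finrank_sup_add_finrank_inf_eq, hbot, finrank_bot, add_zero]
  exact Submodule.finrank_mono (sup_le hpq inf_le_right)

/-- Comparing `dim f(p) + dim (ker f ∩ q) ≤ dim q` and its mirror image with rank–nullity on `p`
and `q` forces `dim f(p) = dim f(q)`. -/
theorem LinearMap.finrank_add_finrank_ker_inf_eq {f : Module.End K V}
    (hf : Disjoint (range f) (ker f)) {p q : Submodule K V} (hpq : p.map f ≤ q)
    (hqp : q.map f ≤ p) :
    finrank K p + finrank K (ker f ⊓ q : Submodule K V) =
      finrank K q + finrank K (ker f ⊓ p : Submodule K V) := by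
  have := p.finrank_map_add_finrank_ker_inf f
  have := q.finrank_map_add_finrank_ker_inf f
  have := finrank_map_add_finrank_ker_inf_le hf hpq
  have := finrank_map_add_finrank_ker_inf_le hf hqp
  omega

end RankNullity

theorem LinearMap.disjoint_range_ker_of_ker_mul_self_le {R M : Type*} [Semiring R]
    [AddCommMonoid M] [Module R M] {f : Module.End R M} (hf : ker (f * f) ≤ ker f) :
    Disjoint (range f) (ker f) := by
  rw [Submodule.disjoint_def]
  rintro _ ⟨y, rfl⟩ hy
  exact hf hy

theorem Module.End.map_eigenspace_le_of_comp_eq {R M N : Type*} [CommRing R] [AddCommGroup M]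
    [Module R M] [AddCommGroup N] [Module R N] {f : M →ₗ[R] N} {A : Module.End R M}
    {B : Module.End R N} (hf : f ∘ₗ A = B ∘ₗ f) (μ : R) :
    (A.eigenspace μ).map f ≤ B.eigenspace μ := by
  rintro _ ⟨x, hx, rfl⟩
  rw [SetLike.mem_coe, End.mem_eigenspace_iff] at hx
  rw [End.mem_eigenspace_iff, ← LinearMap.comp_apply, ← hf, LinearMap.comp_apply, hx,
    map_smul]

namespace Module.End

section Involutions

variable {R M : Type*} [CommRing R] [AddCommGroup M] [Module R M] {A B : Module.End R M}

theorem add_mul_eq_mul_add_of_mul_self_eq_one (hA : A * A = 1) (hB : B * B = 1) :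
    (A + B) * A = B * (A + B) := by
  rw [add_mul, mul_add, hA, hB, add_comm]

theorem eigenspace_mul_neg_one_eq_ker_add (hB : B * B = 1) :
    (B * A).eigenspace (-1) = ker (A + B) := by
  rw [eigenspace_def, neg_one_smul, sub_neg_eq_add, show B * A + 1 = B * (A + B) by
    rw [mul_add, hB], mul_eq_comp, ker_comp_of_ker_eq_bot _ (ker_eq_bot_of_inverse hB)]

theorem ker_add_inf_eigenspace_eq (μ : R) :
    ker (A + B) ⊓ B.eigenspace μ = ker (A + B) ⊓ A.eigenspace (-μ) := by
  ext x
  simp only [Submodule.mem_inf, mem_ker, mem_eigenspace_iff, LinearMap.add_apply, neg_smul]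
  constructor
  · rintro ⟨hx, hBx⟩
    exact ⟨hx, hBx ▸ eq_neg_of_add_eq_zero_left hx⟩
  · rintro ⟨hx, hAx⟩
    exact ⟨hx, by rw [eq_neg_of_add_eq_zero_right hx, hAx, neg_neg]⟩

/-- `B * A + 1` sends `A x` to `(A + B) x` and `(A + B) x` to `B ((A + B) ((A + B) x))`, so
semisimplicity of `B * A` at the eigenvalue `-1` gives `ker (A + B)² = ker (A + B)`. -/
theorem disjoint_range_ker_add (hA : A * A = 1) (hB : B * B = 1)
    (hBA : (B * A).IsFinitelySemisimple) : Disjoint (range (A + B)) (ker (A + B)) := by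
  refine disjoint_range_ker_of_ker_mul_self_le fun x hx => ?_
  have hsq : ker ((B * A + 1) ^ 2) = ker (B * A + 1) := by
    simpa only [genEigenspace_nat, eigenspace_def, neg_one_smul, sub_neg_eq_add] using
      hBA.genEigenspace_eq_eigenspace (-1) (k := (2 : ℕ)) (by norm_num)
  have hTA : (B * A + 1) * A = A + B := by
    rw [add_mul, mul_assoc, hA, mul_one, one_mul, add_comm]
  have hTT : (B * A + 1) ^ 2 * A = B * ((A + B) * (A + B)) := by
    rw [pow_two, mul_assoc, hTA, show B * A + 1 = B * (A + B) by rw [mul_add, hB], mul_assoc]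
  have hAx : A x ∈ ker ((B * A + 1) ^ 2) := by
    rw [mem_ker, ← mul_apply, hTT, mul_apply, mem_ker.mp hx, map_zero]
  rw [hsq, mem_ker, ← mul_apply, hTA] at hAx
  exact hAx

end Involutions

theorem finrank_eigenspace_one_add_finrank_ker_add_inf {K V : Type*} [Field K] [AddCommGroup V]
    [Module K V] [FiniteDimensional K V] {A B : Module.End K V} (hA : A * A = 1) (hB : B * B = 1)
    (hBA : (B * A).IsFinitelySemisimple) :
    finrank K (A.eigenspace 1) + finrank K (ker (A + B) ⊓ A.eigenspace (-1) : Submodule K V) =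
      finrank K (B.eigenspace 1) + finrank K (ker (A + B) ⊓ A.eigenspace 1 : Submodule K V) := by
  have hSA := add_mul_eq_mul_add_of_mul_self_eq_one hA hB
  have hSB := add_mul_eq_mul_add_of_mul_self_eq_one hB hA
  rw [add_comm B A] at hSB
  rw [← ker_add_inf_eigenspace_eq]
  exact finrank_add_finrank_ker_inf_eq (disjoint_range_ker_add hA hB hBA)
    (map_eigenspace_le_of_comp_eq hSA 1) (map_eigenspace_le_of_comp_eq hSB 1)

end Module.End

theorem stmt_7_general {F V : Type*} [Field F] [AddCommGroup V] [Module F V]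
    [FiniteDimensional F V] (r h : (Module.End F V)ˣ)
    (hh : h * h = 1) (hrh : h * r * h⁻¹ = r⁻¹)
    (hss : (r : Module.End F V).IsSemisimple) :
    finrank F (Module.End.eigenspace (h : Module.End F V) 1) +
      finrank F ↥(Module.End.eigenspace (r : Module.End F V) (-1) ⊓
        Module.End.eigenspace (h : Module.End F V) (-1)) =
    finrank F (Module.End.eigenspace ((r * h : (Module.End F V)ˣ) : Module.End F V) 1) +
      finrank F ↥(Module.End.eigenspace (r : Module.End F V) (-1) ⊓
        Module.End.eigenspace (h : Module.End F V) 1) := by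
  have hA : (h : Module.End F V) * h = 1 := by rw [← Units.val_mul, hh, Units.val_one]
  have hB : ((r * h : (Module.End F V)ˣ) : Module.End F V) * ↑(r * h) = 1 := by
    rw [inv_eq_of_mul_eq_one_right hh] at hrh
    rw [← Units.val_mul, mul_assoc, ← mul_assoc h, hrh, mul_inv_cancel, Units.val_one]
  have hr : (r : Module.End F V) = ↑(r * h) * h := by rw [Units.val_mul, mul_assoc, hA, mul_one]
  rw [hr] at hss ⊢
  rw [Module.End.eigenspace_mul_neg_one_eq_ker_add hB]
  exact Module.End.finrank_eigenspace_one_add_finrank_ker_add_inf hA hB hss.isFinitelySemisimple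

/-- Dimension formula: if `h² = 1`, `h·r·h⁻¹ = r⁻¹` and `r` is semisimple, then
`dim V₁(h) − dim V₁(rh) = dim(V₋₁(r) ∩ V₁(h)) − dim(V₋₁(r) ∩ V₋₁(h))`
(stated additively to avoid truncated subtraction). -/
theorem stmt_7 {F V : Type*} [Field F] [CharZero F] [AddCommGroup V] [Module F V]
    [FiniteDimensional F V] (r h : (Module.End F V)ˣ)
    (hh : h * h = 1) (hrh : h * r * h⁻¹ = r⁻¹)
    (hss : (r : Module.End F V).IsSemisimple) :
    finrank F (Module.End.eigenspace (h : Module.End F V) 1) +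
      finrank F ↥(Module.End.eigenspace (r : Module.End F V) (-1) ⊓
        Module.End.eigenspace (h : Module.End F V) (-1)) =
    finrank F (Module.End.eigenspace ((r * h : (Module.End F V)ˣ) : Module.End F V) 1) +
      finrank F ↥(Module.End.eigenspace (r : Module.End F V) (-1) ⊓
        Module.End.eigenspace (h : Module.End F V) 1) :=
  stmt_7_general r h hh hrh hss
end

section
/- Let V be a finite-dimensional vector space over a field F and h : V → V a linear involution (h² = Id, char F ≠ 2). A subspace U ⊆ V is h-split if U ∩ h(U) = 0. Then the maximal dimension of an h-split subspace of V equals min(dim V₁(h), dim V₋₁(h)). In particular V contains an h-split subspace of dimension (dim V)/2 if and only if dim V₁(h) = dim V₋₁(h). -/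
open Module

lemma aux_finrank_le {F V : Type*} [Field F] [AddCommGroup V] [Module F V]
    [FiniteDimensional F V] (U W : Submodule F V) (q : V →ₗ[F] V)
    (hrange : ∀ v : V, q v ∈ W) (hker : ∀ u ∈ U, q u = 0 → u = 0) :
    finrank F U ≤ finrank F W := by
  let p : U →ₗ[F] W := LinearMap.codRestrict W (q.comp U.subtype) (fun u => hrange u)
  have hinj : Function.Injective p := by
    rw [← LinearMap.ker_eq_bot, LinearMap.ker_eq_bot']
    intro u hu
    have : q (u : V) = 0 := congrArg Subtype.val hu
    exact Subtype.ext (hker u u.2 this)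
  exact LinearMap.finrank_le_finrank_of_injective hinj

/-- For a linear involution `h` of a finite-dimensional space `V` (char F ≠ 2), the
maximal dimension of an `h`-split subspace (`U ⊓ h(U) = ⊥`) is
`min (dim V₁(h)) (dim V₋₁(h))`; in particular there is an `h`-split subspace of
dimension `(dim V)/2` iff `dim V₁(h) = dim V₋₁(h)`. -/
theorem stmt_8 {F V : Type*} [Field F] [AddCommGroup V] [Module F V]
    [FiniteDimensional F V] (htwo : (2 : F) ≠ 0)
    (h : Module.End F V) (hh : h * h = 1) :
    IsGreatest {n : ℕ | ∃ U : Submodule F V, U ⊓ U.map h = ⊥ ∧ finrank F U = n}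
      (min (finrank F (Module.End.eigenspace h 1))
           (finrank F (Module.End.eigenspace h (-1)))) ∧
    ((∃ U : Submodule F V, U ⊓ U.map h = ⊥ ∧ 2 * finrank F U = finrank F V) ↔
      finrank F (Module.End.eigenspace h 1) = finrank F (Module.End.eigenspace h (-1))) := by
  classical
  set E1 := Module.End.eigenspace h 1 with hE1
  set E2 := Module.End.eigenspace h (-1) with hE2
  have hinv : ∀ v : V, h (h v) = v := fun v => by
    have := congrArg (fun g : Module.End F V => g v) hh; simpa using this
  have mem1 : ∀ v : V, v ∈ E1 ↔ h v = v := fun v => by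
    rw [hE1, Module.End.mem_eigenspace_iff, one_smul]
  have mem2 : ∀ v : V, v ∈ E2 ↔ h v = -v := fun v => by
    rw [hE2, Module.End.mem_eigenspace_iff, neg_one_smul]
  -- the two eigenspaces are disjoint
  have hzero : ∀ v : V, h v = v → h v = -v → v = 0 := by
    intro v e1 e2
    have : (2 : F) • v = 0 := by
      rw [two_smul]
      nth_rewrite 1 [← e1]
      rw [e2, neg_add_cancel]
    rcases smul_eq_zero.1 this with hc | hv
    · exact absurd hc htwo
    · exact hv
  have hdisj : Disjoint E1 E2 := by
    rw [Submodule.disjoint_def]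
    intro v hv1 hv2
    exact hzero v ((mem1 v).1 hv1) ((mem2 v).1 hv2)
  -- decomposition
  have hdecomp : ∀ v : V, ∃ a ∈ E1, ∃ b ∈ E2, a + b = v := by
    intro v
    refine ⟨(2:F)⁻¹ • (v + h v), ?_, (2:F)⁻¹ • (v - h v), ?_, ?_⟩
    · rw [mem1, map_smul, map_add, hinv, add_comm]
    · rw [mem2, map_smul, map_sub, hinv, ← smul_neg, neg_sub]
    · rw [← smul_add]
      have : v + h v + (v - h v) = (2:F) • v := by rw [two_smul]; abel
      rw [this, smul_smul, inv_mul_cancel₀ htwo, one_smul]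
  have hcompl : IsCompl E1 E2 := by
    refine ⟨hdisj, codisjoint_iff.2 ?_⟩
    rw [eq_top_iff]
    intro v _
    obtain ⟨a, ha, b, hb, hab⟩ := hdecomp v
    exact hab ▸ Submodule.add_mem_sup ha hb
  have hsum : finrank F E1 + finrank F E2 = finrank F V :=
    Submodule.finrank_add_eq_of_isCompl hcompl
  -- upper bounds
  have bound1 : ∀ U : Submodule F V, U ⊓ U.map h = ⊥ → finrank F U ≤ finrank F E1 := by
    intro U hU
    refine aux_finrank_le U E1 ((2:F)⁻¹ • (LinearMap.id + (h : V →ₗ[F] V))) ?_ ?_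
    · intro v
      rw [mem1]
      simp only [LinearMap.smul_apply, LinearMap.add_apply, LinearMap.id_apply,
        map_smul, map_add, hinv]
      rw [add_comm]
    · intro u hu hq
      simp only [LinearMap.smul_apply, LinearMap.add_apply, LinearMap.id_apply] at hq
      rcases smul_eq_zero.1 hq with hc | hv
      · exact absurd hc (inv_ne_zero htwo)
      · have hhu : h u = -u := by rw [eq_neg_iff_add_eq_zero, add_comm]; exact hv
        have : u ∈ U ⊓ U.map h :=
          ⟨hu, ⟨-u, neg_mem hu, by rw [map_neg, hhu, neg_neg]⟩⟩
        rw [hU] at this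
        exact this
  have bound2 : ∀ U : Submodule F V, U ⊓ U.map h = ⊥ → finrank F U ≤ finrank F E2 := by
    intro U hU
    refine aux_finrank_le U E2 ((2:F)⁻¹ • (LinearMap.id - (h : V →ₗ[F] V))) ?_ ?_
    · intro v
      rw [mem2]
      simp only [LinearMap.smul_apply, LinearMap.sub_apply, LinearMap.id_apply,
        map_smul, map_sub, hinv]
      rw [← smul_neg, neg_sub]
    · intro u hu hq
      simp only [LinearMap.smul_apply, LinearMap.sub_apply, LinearMap.id_apply] at hq
      rcases smul_eq_zero.1 hq with hc | hv
      · exact absurd hc (inv_ne_zero htwo)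
      · have hhu : h u = u := by rw [sub_eq_zero] at hv; exact hv.symm
        have : u ∈ U ⊓ U.map h := ⟨hu, ⟨u, hu, hhu⟩⟩
        rw [hU] at this
        exact this
  -- construction of a maximal split subspace
  set m := min (finrank F E1) (finrank F E2) with hm
  obtain ⟨U0, hU0split, hU0rank⟩ :
      ∃ U : Submodule F V, U ⊓ U.map h = ⊥ ∧ finrank F U = m := by
    let b1 := finBasis F E1
    let b2 := finBasis F E2
    let v1 : Fin m → V := fun i => (b1 (Fin.castLE (min_le_left _ _) i) : V)
    let v2 : Fin m → V := fun i => (b2 (Fin.castLE (min_le_right _ _) i) : V)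
    have hv1mem : ∀ i, v1 i ∈ E1 := fun i => (b1 _).2
    have hv2mem : ∀ i, v2 i ∈ E2 := fun i => (b2 _).2
    have li1 : LinearIndependent F v1 :=
      ((b1.linearIndependent.comp _ (Fin.castLE_injective _)).map' E1.subtype
        (Submodule.ker_subtype _))
    have li2 : LinearIndependent F v2 :=
      ((b2.linearIndependent.comp _ (Fin.castLE_injective _)).map' E2.subtype
        (Submodule.ker_subtype _))
    -- key independence
    have key : ∀ c d : Fin m → F,
        (∑ i, c i • v1 i) + (∑ i, d i • v2 i) = 0 → c = 0 ∧ d = 0 := by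
      intro c d hcd
      have hx : (∑ i, c i • v1 i) ∈ E1 :=
        Submodule.sum_mem _ (fun i _ => Submodule.smul_mem _ _ (hv1mem i))
      have hy : (∑ i, d i • v2 i) ∈ E2 :=
        Submodule.sum_mem _ (fun i _ => Submodule.smul_mem _ _ (hv2mem i))
      have hxy : (∑ i, c i • v1 i) = -(∑ i, d i • v2 i) := by
        rw [eq_neg_iff_add_eq_zero]; exact hcd
      have hx0 : (∑ i, c i • v1 i) = 0 := by
        refine (Submodule.disjoint_def.1 hdisj) _ hx ?_
        rw [hxy]; exact neg_mem hy
      have hy0 : (∑ i, d i • v2 i) = 0 := by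
        rw [hx0, zero_add] at hcd; exact hcd
      constructor
      · funext i; exact Fintype.linearIndependent_iff.1 li1 c hx0 i
      · funext i; exact Fintype.linearIndependent_iff.1 li2 d hy0 i
    let w : Fin m → V := fun i => v1 i + v2 i
    have hw : ∀ i, h (w i) = v1 i - v2 i := by
      intro i
      show h (v1 i + v2 i) = _
      rw [map_add, (mem1 _).1 (hv1mem i), (mem2 _).1 (hv2mem i), sub_eq_add_neg]
    have liw : LinearIndependent F w := by
      rw [Fintype.linearIndependent_iff]
      intro g hg
      have : (∑ i, g i • v1 i) + (∑ i, g i • v2 i) = 0 := by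
        rw [← Finset.sum_add_distrib]
        simpa only [w, smul_add] using hg
      intro i
      have := (key g g this).1
      exact congrFun this i
    refine ⟨Submodule.span F (Set.range w), ?_, ?_⟩
    · rw [eq_bot_iff]
      rintro u ⟨huU, huh⟩
      obtain ⟨c, hc⟩ := Submodule.mem_span_range_iff_exists_fun F |>.1 huU
      rw [Submodule.map_span, ← Set.range_comp] at huh
      obtain ⟨d, hd⟩ := Submodule.mem_span_range_iff_exists_fun F |>.1 huh
      simp only [Function.comp_apply, hw] at hd
      have hzero' : (∑ i, (c i - d i) • v1 i) + (∑ i, (c i + d i) • v2 i) = 0 := by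
        have h1 : ∑ i, (c i - d i) • v1 i = ∑ i, c i • v1 i - ∑ i, d i • v1 i := by
          rw [← Finset.sum_sub_distrib]
          exact Finset.sum_congr rfl (fun i _ => sub_smul _ _ _)
        have h2 : ∑ i, (c i + d i) • v2 i = ∑ i, c i • v2 i + ∑ i, d i • v2 i := by
          rw [← Finset.sum_add_distrib]
          exact Finset.sum_congr rfl (fun i _ => add_smul _ _ _)
        have hc' : ∑ i, c i • v1 i + ∑ i, c i • v2 i = u := by
          rw [← Finset.sum_add_distrib]
          simpa only [w, smul_add] using hc
        have hd' : ∑ i, d i • v1 i - ∑ i, d i • v2 i = u := by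
          rw [← Finset.sum_sub_distrib]
          simpa only [smul_sub] using hd
        rw [h1, h2]
        calc (∑ i, c i • v1 i - ∑ i, d i • v1 i) + (∑ i, c i • v2 i + ∑ i, d i • v2 i)
            = (∑ i, c i • v1 i + ∑ i, c i • v2 i) - (∑ i, d i • v1 i - ∑ i, d i • v2 i) := by
              abel
          _ = u - u := by rw [hc', hd']
          _ = 0 := sub_self u
      obtain ⟨hcd1, hcd2⟩ := key _ _ hzero'
      have hc0 : c = 0 := by
        funext i
        have e1 := congrFun hcd1 i
        have e2 := congrFun hcd2 i
        simp only [Pi.zero_apply, sub_eq_zero] at e1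
        simp only [Pi.zero_apply] at e2 ⊢
        rw [e1] at e2
        have : (2:F) * d i = 0 := by rw [two_mul]; exact e2
        rcases mul_eq_zero.1 this with hh2 | hdi
        · exact absurd hh2 htwo
        · rw [e1, hdi]
      rw [hc0] at hc
      simp only [Pi.zero_apply, zero_smul, Finset.sum_const_zero] at hc
      simp only [Submodule.mem_bot]
      exact hc.symm
    · rw [finrank_span_eq_card liw, Fintype.card_fin]
  -- assemble
  have hgreat : IsGreatest {n : ℕ | ∃ U : Submodule F V, U ⊓ U.map h = ⊥ ∧ finrank F U = n} m := by
    constructor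
    · exact ⟨U0, hU0split, hU0rank⟩
    · rintro n ⟨U, hU, rfl⟩
      exact le_min (bound1 U hU) (bound2 U hU)
  refine ⟨hgreat, ?_, ?_⟩
  · rintro ⟨U, hU, h2U⟩
    have h1 := bound1 U hU
    have h2 := bound2 U hU
    omega
  · intro heq
    refine ⟨U0, hU0split, ?_⟩
    rw [hU0rank]
    omega
end

section
/- Let G be a group and h ∈ G an element with h² ∈ Z(G) (the center). Then the map r ↦ r·h induces a bijection between the first cohomology set H¹(Ad_h, G) of the involution Ad_h (conjugation by h) and the set of G-conjugacy classes of elements h' ∈ G with h'² = h², under which the neutral class corresponds to the conjugacy class of h. -/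
/-- For `h ∈ G` with `h²` central, the map `r ↦ r·h` identifies `H¹(Ad_h, G)` with the
set of `G`-conjugacy classes of elements `h'` with `h'² = h²`: it carries cocycles to
such elements bijectively, two cocycles are cohomologous iff their images are conjugate,
and the neutral cocycle corresponds to the conjugacy class of `h`. -/
theorem stmt_10 {G : Type*} [Group G] (h : G) (hc : h * h ∈ Subgroup.center G) :
    (∀ r : G, r * (h * r * h⁻¹) = 1 ↔ (r * h) * (r * h) = h * h) ∧
    (Set.BijOn (fun r => r * h) {r : G | r * (h * r * h⁻¹) = 1}
        {h' : G | h' * h' = h * h}) ∧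
    (∀ r r' : G, r * (h * r * h⁻¹) = 1 → r' * (h * r' * h⁻¹) = 1 →
      ((∃ g : G, r' = g⁻¹ * r * (h * g * h⁻¹)) ↔ (∃ g : G, r' * h = g * (r * h) * g⁻¹))) ∧
    (1 : G) * h = h := by
  have key : ∀ r : G, r * (h * r * h⁻¹) = 1 ↔ (r * h) * (r * h) = h * h := by
    intro r
    constructor
    · intro hr
      have : r * h * r = h := by
        have := congrArg (· * h) hr
        simpa [mul_assoc] using this
      calc r * h * (r * h) = (r * h * r) * h := by group
        _ = h * h := by rw [this]
    · intro hr
      have : r * h * r = h := by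
        have := congrArg (· * h⁻¹) hr
        simpa [mul_assoc] using this
      calc r * (h * r * h⁻¹) = (r * h * r) * h⁻¹ := by group
        _ = h * h⁻¹ := by rw [this]
        _ = 1 := mul_inv_cancel h
  refine ⟨key, ⟨?_, ?_, ?_⟩, ?_, one_mul h⟩
  · intro r hr
    exact (key r).mp hr
  · intro a _ b _ hab
    simpa using mul_right_cancel (hab : a * h = b * h)
  · intro h' hh'
    refine ⟨h' * h⁻¹, ?_, by simp⟩
    show h' * h⁻¹ * (h * (h' * h⁻¹) * h⁻¹) = 1
    have : h' * h' = h * h := hh'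
    calc h' * h⁻¹ * (h * (h' * h⁻¹) * h⁻¹) = h' * h' * (h * h)⁻¹ := by group
      _ = 1 := by rw [this]; group
  · intro r r' _ _
    constructor
    · rintro ⟨g, rfl⟩
      exact ⟨g⁻¹, by group⟩
    · rintro ⟨g, hg⟩
      refine ⟨g⁻¹, ?_⟩
      have := congrArg (· * h⁻¹) hg
      simp only [mul_assoc, mul_inv_cancel, mul_one] at this
      rw [this]; group
end

section
/- Let E/F be a finite field extension with char F = 0, U a finite-dimensional vector space over E, and let Tr_{E/F} : {symmetric E-bilinear forms on U} → {symmetric F-bilinear forms on U viewed as an F-space} be defined by Tr(B)(u,v) = Tr_{E/F}(B(u,v)). Then Tr_{E/F} is injective, and its image is exactly the set of symmetric F-bilinear forms B on U satisfying B(λu, v) = B(u, λv) for all λ ∈ E and u, v ∈ U. -/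
/-!
In characteristic 0 the extension `E/F` is separable, so the trace form `(x, y) ↦ Tr(x y)` is
nondegenerate and every `F`-linear functional on `E` is `Tr(x · -)` for a unique `x`. Hence an
`F`-linear functional `φ` on an `E`-module `M` lifts uniquely to an `E`-linear `f` with
`Tr ∘ f = φ`: `f m` is the element representing `l ↦ φ (l • m)`. Applied to `v ↦ C u v`, this
lifts a balanced `F`-bilinear form `C` to an `E`-bilinear form, and uniqueness of the lift makes
it symmetric when `C` is.
-/

section TraceDuality

variable (F : Type*) {E M : Type*} [Field F] [Field E] [Algebra F E] [FiniteDimensional F E]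
  [Algebra.IsSeparable F E]

theorem Algebra.eq_of_forall_trace_mul_eq {x y : E}
    (h : ∀ l, Algebra.trace F E (x * l) = Algebra.trace F E (y * l)) : x = y :=
  sub_eq_zero.mp <| (traceForm_nondegenerate F E).1 _ fun l => by
    simp only [map_sub, LinearMap.sub_apply, Algebra.traceForm_apply, h l, sub_self]

theorem Algebra.exists_trace_mul_eq (φ : Module.Dual F E) :
    ∃ x : E, ∀ l, Algebra.trace F E (x * l) = φ l := by
  let e := (Algebra.traceForm F E).toDual (traceForm_nondegenerate F E)
  refine ⟨e.symm φ, fun l => ?_⟩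
  rw [← Algebra.traceForm_apply, ← LinearMap.BilinForm.toDual_def (traceForm_nondegenerate F E),
    LinearEquiv.apply_symm_apply]

variable [AddCommGroup M] [Module E M]

theorem LinearMap.eq_of_forall_trace_apply_eq {f g : M →ₗ[E] E}
    (h : ∀ m, Algebra.trace F E (f m) = Algebra.trace F E (g m)) : f = g := by
  ext m
  refine Algebra.eq_of_forall_trace_mul_eq F fun l => ?_
  simpa only [map_smul, smul_eq_mul, mul_comm] using h (l • m)

variable [Module F M] [IsScalarTower F E M]

theorem LinearMap.exists_trace_comp_eq (φ : M →ₗ[F] F) :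
    ∃ f : M →ₗ[E] E, ∀ m, Algebra.trace F E (f m) = φ m := by
  choose f hf using fun m : M =>
    Algebra.exists_trace_mul_eq F (φ ∘ₗ (LinearMap.toSpanSingleton E M m).restrictScalars F)
  simp only [LinearMap.coe_comp, LinearMap.coe_restrictScalars, Function.comp_apply,
    LinearMap.toSpanSingleton_apply] at hf
  refine ⟨{ toFun := f, map_add' := fun m m' => ?_, map_smul' := fun c m => ?_ }, fun m => ?_⟩
  · refine Algebra.eq_of_forall_trace_mul_eq F fun l => ?_
    rw [add_mul, map_add, hf, hf, hf, smul_add, map_add]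
  · refine Algebra.eq_of_forall_trace_mul_eq F fun l => ?_
    rw [hf, RingHom.id_apply, smul_eq_mul, mul_assoc, mul_left_comm, hf, smul_smul, mul_comm l c]
  · simpa only [LinearMap.coe_mk, AddHom.coe_mk, mul_one, one_smul] using hf m 1

end TraceDuality

namespace LinearMap.BilinForm

variable (F : Type*) {E U : Type*} [Field F] [Field E] [Algebra F E] [FiniteDimensional F E]
  [Algebra.IsSeparable F E] [AddCommGroup U] [Module E U]

theorem eq_of_forall_trace_apply_eq {B B' : LinearMap.BilinForm E U}
    (h : ∀ u v, Algebra.trace F E (B u v) = Algebra.trace F E (B' u v)) : B = B' :=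
  LinearMap.ext fun u => LinearMap.eq_of_forall_trace_apply_eq F (h u)

variable {F} [Module F U] [IsScalarTower F E U]

theorem exists_trace_comp_eq (C : LinearMap.BilinForm F U)
    (hC : ∀ (l : E) (u v : U), C (l • u) v = C u (l • v)) :
    ∃ B : LinearMap.BilinForm E U, ∀ u v, Algebra.trace F E (B u v) = C u v := by
  choose B hB using fun u => LinearMap.exists_trace_comp_eq F (E := E) (C u)
  refine ⟨{ toFun := B, map_add' := fun u u' => ?_, map_smul' := fun c u => ?_ }, hB⟩
  · refine LinearMap.eq_of_forall_trace_apply_eq F fun v => ?_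
    simp only [hB, map_add, LinearMap.add_apply]
  · refine LinearMap.eq_of_forall_trace_apply_eq F fun v => ?_
    rw [hB, hC, ← hB, RingHom.id_apply, LinearMap.smul_apply, map_smul]

end LinearMap.BilinForm

theorem stmt_14_general {F E U : Type*} [Field F] [CharZero F] [Field E] [Algebra F E]
    [FiniteDimensional F E] [AddCommGroup U] [Module F U] [Module E U]
    [IsScalarTower F E U] :
    (∀ B B' : LinearMap.BilinForm E U,
      (∀ x y, B x y = B y x) → (∀ x y, B' x y = B' y x) →
      (∀ u v, Algebra.trace F E (B u v) = Algebra.trace F E (B' u v)) → B = B') ∧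
    (∀ C : LinearMap.BilinForm F U,
      ((∀ x y, C x y = C y x) ∧ ∀ (l : E) (u v : U), C (l • u) v = C u (l • v)) ↔
      ∃ B : LinearMap.BilinForm E U, (∀ x y, B x y = B y x) ∧
        ∀ u v, C u v = Algebra.trace F E (B u v)) := by
  refine ⟨fun B B' _ _ => LinearMap.BilinForm.eq_of_forall_trace_apply_eq F,
    fun C => ⟨?_, ?_⟩⟩
  · rintro ⟨hsymm, hbal⟩
    obtain ⟨B, hB⟩ := C.exists_trace_comp_eq hbal
    have hflip : B.flip = B :=
      LinearMap.BilinForm.eq_of_forall_trace_apply_eq F fun u v => by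
        rw [LinearMap.BilinForm.flip_apply, hB, hB, hsymm]
    refine ⟨B, fun x y => ?_, fun u v => (hB u v).symm⟩
    rw [← LinearMap.congr_fun₂ hflip y x, LinearMap.BilinForm.flip_apply]
  · rintro ⟨B, hBsymm, hBC⟩
    refine ⟨fun x y => by rw [hBC, hBC, hBsymm x y], fun l u v => ?_⟩
    rw [hBC, hBC, LinearMap.map_smul₂, (B u).map_smul]

/-- For a finite extension `E/F` of fields of characteristic 0 and a finite-dimensional
`E`-vector space `U`, the trace map `B ↦ Tr_{E/F} ∘ B` from symmetric `E`-bilinear forms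
on `U` to symmetric `F`-bilinear forms on `U` is injective, and its image is exactly the
set of symmetric `F`-bilinear forms `C` satisfying `C(λ•u, v) = C(u, λ•v)` for all
`λ ∈ E`. -/
theorem stmt_14 {F E U : Type*} [Field F] [CharZero F] [Field E] [Algebra F E]
    [FiniteDimensional F E] [AddCommGroup U] [Module F U] [Module E U]
    [IsScalarTower F E U] [FiniteDimensional E U] :
    (∀ B B' : LinearMap.BilinForm E U,
      (∀ x y, B x y = B y x) → (∀ x y, B' x y = B' y x) →
      (∀ u v, Algebra.trace F E (B u v) = Algebra.trace F E (B' u v)) → B = B') ∧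
    (∀ C : LinearMap.BilinForm F U,
      ((∀ x y, C x y = C y x) ∧ ∀ (l : E) (u v : U), C (l • u) v = C u (l • v)) ↔
      ∃ B : LinearMap.BilinForm E U, (∀ x y, B x y = B y x) ∧
        ∀ u v, C u v = Algebra.trace F E (B u v)) :=
  stmt_14_general
end

section
/- Let V be a finite-dimensional vector space over a field F with a nondegenerate symmetric bilinear form B, and let r ∈ O(B) be a semisimple isometry. If λ, τ are eigenvalues of r (in an algebraic closure) such that λ and τ⁻¹ are not Galois-conjugate over F, then the primary subspaces V_λ(r) and V_τ(r) are orthogonal with respect to B. -/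
open Polynomial

section Aux

variable {F V : Type*} [Field F] [AddCommGroup V] [Module F V]

/-- The adjoint identity: for an isometry `r`, `B x (g(r) y) = B (g(r⁻¹) x) y`. -/
lemma aux_adjoint (B : LinearMap.BilinForm F V) (r : (Module.End F V)ˣ)
    (hiso : ∀ u v : V, B ((r : Module.End F V) u) ((r : Module.End F V) v) = B u v)
    (g : F[X]) (x y : V) :
    B x (aeval (r : Module.End F V) g y)
      = B (aeval ((r⁻¹ : (Module.End F V)ˣ) : Module.End F V) g x) y := by
  set e : Module.End F V := (r : Module.End F V)
  set ei : Module.End F V := ((r⁻¹ : (Module.End F V)ˣ) : Module.End F V)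
  have hmulinv : e * ei = 1 := by
    rw [show e * ei = ((r * r⁻¹ : (Module.End F V)ˣ) : Module.End F V) from rfl, mul_inv_cancel]
    rfl
  have h1 : ∀ x y : V, B x (e y) = B (ei x) y := by
    intro x y
    have hx : x = e (ei x) := by
      rw [← Module.End.mul_apply, hmulinv]; rfl
    conv_lhs => rw [hx]
    exact hiso (ei x) y
  have hpow : ∀ (k : ℕ) (x y : V), B x ((e ^ k) y) = B ((ei ^ k) x) y := by
    intro k
    induction k with
    | zero => simp
    | succ k ih =>
      intro x y
      rw [pow_succ, pow_succ', Module.End.mul_apply, Module.End.mul_apply, ih, h1]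
  induction g using Polynomial.induction_on' with
  | add p q hp hq => simp [map_add, hp, hq]
  | monomial k a =>
    simp only [aeval_monomial, Module.End.mul_apply, Module.algebraMap_end_apply, map_smul,
      LinearMap.map_smul₂, LinearMap.smul_apply]
    rw [hpow k x y]

/-- `(reverse p)(r⁻¹) * r ^ p.natDegree = p(r)` for a unit `r` of the endomorphism algebra. -/
lemma aux_reverse_aeval (r : (Module.End F V)ˣ) (p : F[X]) :
    aeval ((r⁻¹ : (Module.End F V)ˣ) : Module.End F V) (reverse p)
        * (r : Module.End F V) ^ p.natDegree
      = aeval (r : Module.End F V) p := by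
  set e : Module.End F V := (r : Module.End F V)
  set ei : Module.End F V := ((r⁻¹ : (Module.End F V)ˣ) : Module.End F V)
  have hmulinv : e * ei = 1 := by
    rw [show e * ei = ((r * r⁻¹ : (Module.End F V)ˣ) : Module.End F V) from rfl, mul_inv_cancel]
    rfl
  have hinvmul : ei * e = 1 := by
    rw [show ei * e = ((r⁻¹ * r : (Module.End F V)ˣ) : Module.End F V) from rfl, inv_mul_cancel]
    rfl
  have hcomm : Commute ei e := by
    unfold Commute SemiconjBy
    rw [hinvmul, hmulinv]
  have hm : ∀ m : ℕ, ei ^ m * e ^ m = 1 := by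
    intro m
    rw [← hcomm.mul_pow, hinvmul, one_pow]
  have key : ∀ f : F[X], f.natDegree ≤ p.natDegree →
      aeval ei (reflect p.natDegree f) * e ^ p.natDegree = aeval e f := by
    refine Polynomial.induction_with_natDegree_le
      (fun f => aeval ei (reflect p.natDegree f) * e ^ p.natDegree = aeval e f)
      p.natDegree ?_ ?_ ?_
    · simp
    · intro n a _ hnN
      rw [reflect_C_mul_X_pow, revAt_le hnN]
      simp only [map_mul, aeval_C, map_pow, aeval_X]
      rw [mul_assoc, show e ^ p.natDegree = e ^ (p.natDegree - n) * e ^ n by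
          rw [← pow_add, Nat.sub_add_cancel hnN],
        ← mul_assoc (ei ^ (p.natDegree - n)), hm, one_mul]
    · intro f g _ _ hf hg
      simp [reflect_add, map_add, add_mul, hf, hg]
  exact key p le_rfl

end Aux

/-- If `r` is a semisimple isometry of a nondegenerate symmetric bilinear form `B` and
`λ, τ` are elements of the algebraic closure such that `λ` and `τ⁻¹` are not Galois
conjugate over `F` (their minimal polynomials differ), then the primary subspaces
`V_λ(r) = ker m_λ(r)` and `V_τ(r) = ker m_τ(r)` are `B`-orthogonal. -/
theorem stmt_15 {F V : Type*} [Field F] [CharZero F] [AddCommGroup V] [Module F V]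
    [FiniteDimensional F V] (B : LinearMap.BilinForm F V)
    (hsymm : ∀ x y, B x y = B y x) (hnd : B.Nondegenerate)
    (r : (Module.End F V)ˣ)
    (hiso : ∀ u v : V, B ((r : Module.End F V) u) ((r : Module.End F V) v) = B u v)
    (hss : (r : Module.End F V).IsSemisimple)
    (lam tau : AlgebraicClosure F) (htau : tau ≠ 0)
    (hgal : minpoly F lam ≠ minpoly F tau⁻¹) :
    ∀ u ∈ LinearMap.ker (aeval (r : Module.End F V) (minpoly F lam)),
      ∀ v ∈ LinearMap.ker (aeval (r : Module.End F V) (minpoly F tau)),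
        B u v = 0 := by
  set e : Module.End F V := (r : Module.End F V) with he
  set ei : Module.End F V := ((r⁻¹ : (Module.End F V)ˣ) : Module.End F V) with hei
  set p : F[X] := minpoly F lam with hp
  set q : F[X] := minpoly F tau with hq
  set f : F[X] := reverse p with hf
  have hlam_int : IsIntegral F lam := Algebra.IsIntegral.isIntegral lam
  have htau_int : IsIntegral F tau := Algebra.IsIntegral.isIntegral tau
  have htauinv_int : IsIntegral F tau⁻¹ := Algebra.IsIntegral.isIntegral tau⁻¹
  -- `q` does not divide `f = reverse p`
  have hndvd : ¬ q ∣ f := by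
    rw [minpoly.dvd_iff]
    intro h0
    have htinv : tau⁻¹ ≠ 0 := inv_ne_zero htau
    letI : Invertible (tau⁻¹) := invertibleOfNonzero htinv
    have hinv : (⅟ (tau⁻¹) : AlgebraicClosure F) = tau := by
      rw [invOf_eq_inv, inv_inv]
    have h1 : aeval (tau⁻¹) p = 0 := by
      have := (eval₂_reverse_eq_zero_iff (algebraMap F (AlgebraicClosure F)) (tau⁻¹) p).mp ?_
      · rwa [aeval_def]
      · rw [hinv, ← aeval_def]; exact h0
    exact hgal (minpoly.eq_of_irreducible_of_monic (minpoly.irreducible hlam_int) h1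
      (minpoly.monic hlam_int))
  have hcop : IsCoprime f q :=
    ((minpoly.irreducible htau_int).coprime_iff_not_dvd.mpr hndvd).symm
  intro u hu v hv
  rw [LinearMap.mem_ker] at hu hv
  -- `v` is in the image of `f(e)` restricted to the kernel of `q(e)`
  obtain ⟨a, b, hab⟩ := hcop
  have hv' : v = aeval e f (aeval e a v) := by
    have h := congrArg (fun g : F[X] => aeval e g v) hab
    simp only [map_add, map_mul, map_one, LinearMap.add_apply, Module.End.mul_apply,
      Module.End.one_apply, hv, map_zero] at h
    calc v = aeval e a (aeval e f v) + 0 := h.symm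
    _ = aeval e (a * f) v := by rw [add_zero, map_mul, Module.End.mul_apply]
    _ = aeval e (f * a) v := by rw [mul_comm]
    _ = aeval e f (aeval e a v) := by rw [map_mul, Module.End.mul_apply]
  -- `f(e⁻¹) u = 0`
  have hmulinv : e * ei = 1 := by
    rw [show e * ei = ((r * r⁻¹ : (Module.End F V)ˣ) : Module.End F V) from rfl, mul_inv_cancel]
    rfl
  have hu' : aeval ei f u = 0 := by
    have hkey := aux_reverse_aeval r p
    have hm : ∀ m : ℕ, e ^ m * ei ^ m = 1 := by
      intro m
      have hcomm : Commute e ei := by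
        unfold Commute SemiconjBy
        rw [hmulinv]
        rw [show ei * e = ((r⁻¹ * r : (Module.End F V)ˣ) : Module.End F V) from rfl,
          inv_mul_cancel]
        rfl
      rw [← hcomm.mul_pow, hmulinv, one_pow]
    have hcomm2 : Commute ei (aeval e p) :=
      Algebra.commute_of_mem_adjoin_singleton_of_commute
        (Polynomial.aeval_mem_adjoin_singleton F e)
        (by
          unfold Commute SemiconjBy
          rw [hmulinv]
          rw [show ei * e = ((r⁻¹ * r : (Module.End F V)ˣ) : Module.End F V) from rfl,
            inv_mul_cancel]
          rfl)
    have hu2 : u = (e ^ p.natDegree) ((ei ^ p.natDegree) u) := by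
      rw [← Module.End.mul_apply, hm, Module.End.one_apply]
    calc aeval ei f u = aeval ei f ((e ^ p.natDegree) ((ei ^ p.natDegree) u)) := by rw [← hu2]
    _ = (aeval ei f * e ^ p.natDegree) ((ei ^ p.natDegree) u) := rfl
    _ = aeval e p ((ei ^ p.natDegree) u) := by rw [hkey]
    _ = (aeval e p * ei ^ p.natDegree) u := rfl
    _ = (ei ^ p.natDegree * aeval e p) u := by
        rw [← (hcomm2.pow_left p.natDegree).eq]
    _ = (ei ^ p.natDegree) (aeval e p u) := rfl
    _ = 0 := by rw [hu, map_zero]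
  -- conclude
  rw [hv', aux_adjoint B r hiso f u (aeval e a v), hu', LinearMap.map_zero₂]
end

section
/- Let F = Q_p with p ≡ 3 mod 4, let H = Q_p[i,j] be the quaternion algebra with i² = p, j² = −1, ij = −ji, let G be the group of elements of reduced norm 1 in H, and let θ = Ad_i (conjugation by i) acting on G. Then there exists a closed double coset of H' = G^θ in G that is not stable under g ↦ θ(g)⁻¹; i.e. the symmetric pair (G, G^θ, Ad_i) is not stable. Concretely, the subgroup B ⊆ Q_p^× generated by norms from Q_p[ij] satisfies B/(Q_p^×)² ≅ Z/2Z generated by −p, and −p lies in N(Q_p[i]^×). -/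
open scoped Quaternion

noncomputable section

/-- Topology on the quaternion algebra over `ℚ_p`, induced from the coordinates. -/
instance quatTopology (p : ℕ) [Fact p.Prime] (c₁ c₂ : ℚ_[p]) :
    TopologicalSpace ℍ[ℚ_[p], c₁, c₂] :=
  TopologicalSpace.induced (fun a => (a.re, a.imI, a.imJ, a.imK)) inferInstance

/-!
The fixed group `H = G^θ` is the norm-one torus `{x + y i : x² - p y² = 1}` of `ℚ_p(√p)`.
Since `x²` and `p y²` have different `p`-adic norms (their valuations differ in parity), the
norm of `x² - p y²` is the larger of the two; hence `H` is bounded, so compact, and every double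
coset `H g H` is compact, hence closed. The same dichotomy shows that `x² - p y²` is the dominant
term times a principal unit, and principal units are squares by Hensel's lemma (`p` is odd):
this gives the description of the norm group, and also a `z` with `z² = 1 + p`.
For `g = i + z j` of norm one, `σ g = -i + z j`; comparing coordinates in `σ g = h₁ g h₂`
forces `h₁ = y i` with `-p y² = 1`, i.e. `-p` would be a square, which its odd valuation forbids.
-/

open DoubleCoset

theorem setOf_fixed_mul_mul_fixed_eq_doubleCoset {M : Type*} [Mul M] (θ : M → M) (G : Set M)
    (g : M) :
    {x | ∃ h₁ ∈ G, ∃ h₂ ∈ G, θ h₁ = h₁ ∧ θ h₂ = h₂ ∧ x = h₁ * g * h₂} =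
      doubleCoset g {a ∈ G | θ a = a} {a ∈ G | θ a = a} := by
  ext x
  simp only [mem_doubleCoset, Set.mem_ofPred_eq]
  constructor
  · rintro ⟨h₁, hG₁, h₂, hG₂, hθ₁, hθ₂, rfl⟩
    exact ⟨h₁, ⟨hG₁, hθ₁⟩, h₂, ⟨hG₂, hθ₂⟩, rfl⟩
  · rintro ⟨h₁, ⟨hG₁, hθ₁⟩, h₂, ⟨hG₂, hθ₂⟩, rfl⟩
    exact ⟨h₁, hG₁, h₂, hG₂, hθ₁, hθ₂, rfl⟩

theorem mem_doubleCoset_self_of_one_mem {M : Type*} [MulOneClass M] {s t : Set M} (a : M)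
    (hs : 1 ∈ s) (ht : 1 ∈ t) : a ∈ doubleCoset a s t :=
  mem_doubleCoset.2 ⟨1, hs, 1, ht, by rw [one_mul, mul_one]⟩

def normOneTorus {R : Type*} [Ring R] (c : R) : Set (R × R) := {v | v.1 ^ 2 - c * v.2 ^ 2 = 1}

namespace Padic

variable {p : ℕ} [Fact p.Prime]

theorem exists_sq_eq_one_add (hp2 : p ≠ 2) {w : ℚ_[p]} (hw : ‖w‖ < 1) :
    ∃ s : ℚ_[p], s ^ 2 = 1 + w := by
  obtain ⟨w, rfl⟩ : ∃ w' : ℤ_[p], (w' : ℚ_[p]) = w := ⟨⟨w, hw.le⟩, rfl⟩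
  have h2 : ‖(2 : ℤ_[p])‖ = 1 := by
    exact_mod_cast PadicInt.norm_natCast_eq_one_iff.2
      ((Nat.coprime_primes Fact.out Nat.prime_two).2 hp2)
  have hnorm : ‖Polynomial.aeval (1 : ℤ_[p]) (Polynomial.X ^ 2 - Polynomial.C (1 + w))‖ <
      ‖Polynomial.aeval (1 : ℤ_[p]) (Polynomial.X ^ 2 - Polynomial.C (1 + w)).derivative‖ ^ 2 := by
    simpa [Polynomial.derivative_pow, h2] using hw
  obtain ⟨s, hs, -⟩ := hensels_lemma hnorm
  have hs : s ^ 2 = 1 + w := by simpa [sub_eq_zero] using hs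
  exact ⟨s, by simpa using congrArg ((↑) : ℤ_[p] → ℚ_[p]) hs⟩

theorem exists_add_eq_mul_sq (hp2 : p ≠ 2) {a b : ℚ_[p]} (h : ‖b‖ < ‖a‖) :
    ∃ s : ℚ_[p], a + b = a * s ^ 2 := by
  have ha : a ≠ 0 := norm_pos_iff.1 ((norm_nonneg b).trans_lt h)
  obtain ⟨s, hs⟩ := exists_sq_eq_one_add hp2 (w := b / a)
    (by rwa [norm_div, div_lt_one (norm_pos_iff.2 ha)])
  exact ⟨s, by rw [hs]; field_simp⟩

theorem norm_sq_ne_norm_p_mul_sq (x : ℚ_[p]) {y : ℚ_[p]} (hy : y ≠ 0) :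
    ‖x ^ 2‖ ≠ ‖(p : ℚ_[p]) * y ^ 2‖ := by
  have hp0 : (p : ℚ_[p]) ≠ 0 := Nat.cast_ne_zero.2 (NeZero.ne p)
  have hpy : (p : ℚ_[p]) * y ^ 2 ≠ 0 := mul_ne_zero hp0 (pow_ne_zero _ hy)
  rcases eq_or_ne x 0 with rfl | hx
  · simpa [eq_comm] using hpy
  have hp1 : (1 : ℝ) < p := by exact_mod_cast (Fact.out : p.Prime).one_lt
  intro h
  rw [norm_eq_zpow_neg_valuation (pow_ne_zero _ hx), norm_eq_zpow_neg_valuation hpy,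
    zpow_right_inj₀ (by positivity) hp1.ne', valuation_mul hp0 (pow_ne_zero _ hy), valuation_p,
    valuation_pow, valuation_pow] at h
  omega

theorem not_exists_neg_p_eq_sq : ¬ ∃ v : ℚ_[p], -(p : ℚ_[p]) = v ^ 2 := by
  rintro ⟨v, hv⟩
  refine norm_sq_ne_norm_p_mul_sq v one_ne_zero ?_
  rw [← hv, norm_neg, one_pow, mul_one]

theorem norm_sq_sub_p_mul_sq (x y : ℚ_[p]) :
    ‖x ^ 2 - p * y ^ 2‖ = max ‖x ^ 2‖ ‖(p : ℚ_[p]) * y ^ 2‖ := by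
  rcases eq_or_ne y 0 with rfl | hy
  · simp
  have hne : ‖x ^ 2‖ ≠ ‖-((p : ℚ_[p]) * y ^ 2)‖ := by
    rw [norm_neg]
    exact norm_sq_ne_norm_p_mul_sq x hy
  rw [sub_eq_add_neg, add_eq_max_of_ne hne, norm_neg]

theorem exists_eq_sq_or_eq_neg_p_mul_sq {t : ℚ_[p]} (hp2 : p ≠ 2)
    (ht : ∃ x y : ℚ_[p], t = x ^ 2 - p * y ^ 2) :
    (∃ v : ℚ_[p], t = v ^ 2) ∨ ∃ v : ℚ_[p], t = -(p : ℚ_[p]) * v ^ 2 := by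
  obtain ⟨x, y, rfl⟩ := ht
  rcases eq_or_ne y 0 with rfl | hy
  · exact .inl ⟨x, by ring⟩
  rcases (norm_sq_ne_norm_p_mul_sq x hy).lt_or_gt with h | h
  · obtain ⟨s, hs⟩ := exists_add_eq_mul_sq hp2 (a := -(p : ℚ_[p]) * y ^ 2) (b := x ^ 2)
      (by rwa [neg_mul, norm_neg])
    exact .inr ⟨y * s, by linear_combination hs⟩
  · obtain ⟨s, hs⟩ := exists_add_eq_mul_sq hp2 (a := x ^ 2) (b := -(p : ℚ_[p]) * y ^ 2)
      (by rwa [neg_mul, norm_neg])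
    exact .inl ⟨x * s, by linear_combination hs⟩

theorem norm_le_of_sq_sub_p_mul_sq_eq_one {x y : ℚ_[p]} (h : x ^ 2 - p * y ^ 2 = 1) :
    ‖x‖ ≤ 1 ∧ ‖y‖ ≤ p := by
  have hmax := norm_sq_sub_p_mul_sq x y
  rw [h, norm_one, norm_mul, norm_p, norm_pow, norm_pow] at hmax
  have hp1 : (1 : ℝ) ≤ p := by exact_mod_cast (NeZero.pos p)
  have hx : ‖x‖ ^ 2 ≤ 1 := hmax ▸ le_max_left _ _
  have hy : (p : ℝ)⁻¹ * ‖y‖ ^ 2 ≤ 1 := hmax ▸ le_max_right _ _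
  rw [inv_mul_le_iff₀ (by positivity), mul_one] at hy
  constructor <;> nlinarith [norm_nonneg x, norm_nonneg y]

theorem isCompact_normOneTorus : IsCompact (normOneTorus (p : ℚ_[p])) := by
  refine (isCompact_closedBall (0 : ℚ_[p]) 1).prod (isCompact_closedBall (0 : ℚ_[p]) p)
    |>.of_isClosed_subset ?_ fun v hv => ?_
  · exact isClosed_eq (by fun_prop) continuous_const
  · simpa using norm_le_of_sq_sub_p_mul_sq_eq_one hv

end Padic

namespace QuaternionAlgebra

section Field

variable {R : Type*} [Field R] {c d : R}

def ofReImI (v : R × R) : ℍ[R, c, d] := ⟨v.1, v.2, 0, 0⟩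

theorem inv_smul_mk_mul_mul_mk (hc : c ≠ 0) (a : ℍ[R, c, d]) :
    c⁻¹ • ((⟨0, 1, 0, 0⟩ : ℍ[R, c, d]) * a * ⟨0, 1, 0, 0⟩) = ⟨a.re, a.imI, -a.imJ, -a.imK⟩ := by
  ext <;> simp <;> field_simp

theorem mul_star_eq_one_iff (a : ℍ[R, c, d]) : a * star a = 1 ↔ (a * star a).re = 1 :=
  ⟨fun h => by rw [h, re_one], fun h => by rw [mul_star_eq_coe, h, coe_one]⟩

theorem mk_mul_star_eq_one_iff (x y : R) :
    (⟨x, y, 0, 0⟩ : ℍ[R, c, d]) * star ⟨x, y, 0, 0⟩ = 1 ↔ x ^ 2 - c * y ^ 2 = 1 := by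
  rw [mul_star_eq_one_iff]
  simp [star_mk, sq, sub_eq_add_neg, mul_assoc]

theorem mk_zero_one_mul_star_eq_one_iff (z : R) :
    (⟨0, 1, z, 0⟩ : ℍ[R, c, -1]) * star ⟨0, 1, z, 0⟩ = 1 ↔ z ^ 2 - c = 1 := by
  rw [mul_star_eq_one_iff]
  simp [star_mk, sq, sub_eq_add_neg, add_comm]

theorem setOf_mul_star_eq_one_fixed_eq_image [CharZero R] (hc : c ≠ 0) :
    {a : ℍ[R, c, d] | a * star a = 1 ∧ c⁻¹ • ((⟨0, 1, 0, 0⟩ : ℍ[R, c, d]) * a * ⟨0, 1, 0, 0⟩) = a} =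
      ofReImI '' normOneTorus c := by
  ext a
  rw [Set.mem_ofPred_eq, inv_smul_mk_mul_mul_mk hc]
  constructor
  · rintro ⟨hnorm, hfix⟩
    rw [QuaternionAlgebra.ext_iff] at hfix
    obtain ⟨-, -, hJ, hK⟩ := hfix
    rw [CharZero.neg_eq_self_iff] at hJ hK
    have ha : a = ⟨a.re, a.imI, 0, 0⟩ := by ext <;> simp [hJ, hK]
    rw [ha, mk_mul_star_eq_one_iff] at hnorm
    exact ⟨(a.re, a.imI), hnorm, ha.symm⟩
  · rintro ⟨v, hv, rfl⟩
    exact ⟨(mk_mul_star_eq_one_iff _ _).2 hv, by ext <;> simp [ofReImI]⟩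

theorem one_mem_image_ofReImI : (1 : ℍ[R, c, d]) ∈ ofReImI '' normOneTorus c :=
  ⟨(1, 0), by simp [normOneTorus], rfl⟩

theorem ofReImI_mul_mk_mul_ofReImI (v w : R × R) (z : R) :
    ofReImI v * (⟨0, 1, z, 0⟩ : ℍ[R, c, d]) * ofReImI w =
      ⟨c * (v.1 * w.2 + w.1 * v.2), v.1 * w.1 + c * v.2 * w.2, z * (v.1 * w.1 - c * v.2 * w.2),
        z * (v.2 * w.1 - v.1 * w.2)⟩ := by
  ext <;> simp [ofReImI] <;> ring

theorem mk_neg_notMem_doubleCoset [CharZero R] {z : R} (hc : c ≠ 0) (hz : z ≠ 0)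
    (hnsq : ¬ ∃ v : R, -c = v ^ 2) :
    (⟨0, -1, z, 0⟩ : ℍ[R, c, d]) ∉
      doubleCoset ⟨0, 1, z, 0⟩ (ofReImI '' normOneTorus c) (ofReImI '' normOneTorus c) := by
  rw [mem_doubleCoset]
  rintro ⟨_, ⟨v, hv, rfl⟩, _, ⟨w, -, rfl⟩, h⟩
  rw [ofReImI_mul_mk_mul_ofReImI, QuaternionAlgebra.ext_iff] at h
  obtain ⟨x₁, y₁⟩ := v
  obtain ⟨x₂, y₂⟩ := w
  obtain ⟨h₁, h₂, h₃, h₄⟩ := h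
  dsimp only at h₁ h₂ h₃ h₄
  have hsum : x₁ * y₂ + x₂ * y₁ = 0 := (mul_eq_zero.1 h₁.symm).resolve_left hc
  have hdiff : y₁ * x₂ - x₁ * y₂ = 0 := (mul_eq_zero.1 h₄.symm).resolve_left hz
  have hI : x₁ * x₂ - c * y₁ * y₂ = 1 := mul_left_cancel₀ hz (by linear_combination -h₃)
  have hyy : c * y₁ * y₂ = -1 := by linear_combination (-h₂ - hI) / 2
  have hy₂ : y₂ ≠ 0 := by rintro rfl; simp at hyy
  have hx₁ : x₁ = 0 :=
    (mul_eq_zero.1 (by linear_combination (hsum - hdiff) / 2 : x₁ * y₂ = 0)).resolve_right hy₂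
  have hy₁ : y₁ ≠ 0 := by rintro rfl; simp at hyy
  refine hnsq ⟨y₁⁻¹, ?_⟩
  simp only [normOneTorus, Set.mem_ofPred_eq, hx₁] at hv
  field_simp
  linear_combination hv

end Field

section Padic

variable {p : ℕ} [Fact p.Prime] {c₁ c₂ : ℚ_[p]}

instance : T2Space ℍ[ℚ_[p], c₁, c₂] :=
  .of_injective_continuous (fun a b h => by
    simp only [Prod.mk.injEq] at h
    ext <;> tauto) continuous_induced_dom

instance : ContinuousMul ℍ[ℚ_[p], c₁, c₂] where
  continuous_mul := by
    have hcoord : Continuous fun a : ℍ[ℚ_[p], c₁, c₂] => (a.re, a.imI, a.imJ, a.imK) :=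
      continuous_induced_dom
    have hre := hcoord.fst
    have hI := hcoord.snd.fst
    have hJ := hcoord.snd.snd.fst
    have hK := hcoord.snd.snd.snd
    have hmul : (fun q : ℍ[ℚ_[p], c₁, c₂] × ℍ[ℚ_[p], c₁, c₂] => q.1 * q.2) = fun q =>
        (⟨q.1.re, q.1.imI, q.1.imJ, q.1.imK⟩ : ℍ[ℚ_[p], c₁, c₂]) *
          ⟨q.2.re, q.2.imI, q.2.imJ, q.2.imK⟩ := rfl
    rw [hmul, continuous_induced_rng]
    simp only [mk_mul_mk, Function.comp_def]
    fun_prop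

theorem continuous_ofReImI : Continuous (ofReImI : ℚ_[p] × ℚ_[p] → ℍ[ℚ_[p], c₁, c₂]) := by
  rw [continuous_induced_rng]
  simp only [ofReImI, Function.comp_def]
  fun_prop

theorem isClosed_doubleCoset_image_ofReImI (g : ℍ[ℚ_[p], c₁, c₂]) :
    IsClosed (doubleCoset g (ofReImI '' normOneTorus (p : ℚ_[p]))
      (ofReImI '' normOneTorus (p : ℚ_[p]))) := by
  have hH := Padic.isCompact_normOneTorus.image (continuous_ofReImI (c₁ := c₁) (c₂ := c₂))
  exact ((hH.mul isCompact_singleton).mul hH).isClosed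

end Padic

end QuaternionAlgebra

open QuaternionAlgebra in
/-- The pair `(G, G^θ, Ad_i)` for the norm-one group `G` of the quaternion algebra
`ℍ[ℚ_p, p, -1]` (`p ≡ 3 mod 4`) with `θ = Ad_i` is not stable: some closed double coset
of `H = G^θ` in `G` is not preserved by `σ : g ↦ θ(g)⁻¹`.  Concretely, the group `B` of
norms from `ℚ_p[ij] = ℚ_p[√p]` satisfies `B/(ℚ_p^×)² ≅ ℤ/2ℤ` generated by the nonsquare
`-p`, and `-p` is a norm from `ℚ_p[i]`. -/
theorem stmt_18 (p : ℕ) [Fact p.Prime] (hp : p % 4 = 3) :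
    -- notation: the quaternion algebra, i, θ = Ad_i, σ, G and H = G^θ
    ∀ (i : ℍ[ℚ_[p], (p : ℚ_[p]), -1]) (_ : i = ⟨0, 1, 0, 0⟩)
      (θ : ℍ[ℚ_[p], (p : ℚ_[p]), -1] → ℍ[ℚ_[p], (p : ℚ_[p]), -1])
      (_ : θ = fun a => ((p : ℚ_[p])⁻¹) • (i * a * i))
      (G : Set ℍ[ℚ_[p], (p : ℚ_[p]), -1]) (_ : G = {a | a * star a = 1}),
    -- (1) the pair is not stable: a closed, non-σ-stable double coset exists
    (∃ g ∈ G, IsClosed {x | ∃ h₁ ∈ G, ∃ h₂ ∈ G,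
          θ h₁ = h₁ ∧ θ h₂ = h₂ ∧ x = h₁ * g * h₂} ∧
        ¬ ((fun a => θ (star a)) '' {x | ∃ h₁ ∈ G, ∃ h₂ ∈ G,
              θ h₁ = h₁ ∧ θ h₂ = h₂ ∧ x = h₁ * g * h₂}
            = {x | ∃ h₁ ∈ G, ∃ h₂ ∈ G, θ h₁ = h₁ ∧ θ h₂ = h₂ ∧ x = h₁ * g * h₂})) ∧
    -- (2) B/(ℚ_p^×)² ≅ ℤ/2ℤ, generated by -p:
    (∀ t : ℚ_[p], t ≠ 0 → (∃ x y : ℚ_[p], t = x ^ 2 - p * y ^ 2) →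
        ((∃ v : ℚ_[p], t = v ^ 2) ∨ ∃ v : ℚ_[p], t = (-(p : ℚ_[p])) * v ^ 2)) ∧
    (¬ ∃ v : ℚ_[p], (-(p : ℚ_[p])) = v ^ 2) ∧
    -- (3) -p is a norm from ℚ_p[i]:
    (∃ x y : ℚ_[p], (-(p : ℚ_[p])) = x ^ 2 - p * y ^ 2) := by
  intro i hi θ hθ G hG
  have hp2 : p ≠ 2 := by omega
  have hp0 : (p : ℚ_[p]) ≠ 0 := Nat.cast_ne_zero.2 (NeZero.ne p)
  obtain ⟨z, hz⟩ := Padic.exists_sq_eq_one_add hp2 Padic.norm_p_lt_one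
  have hz0 : z ≠ 0 := by
    rintro rfl
    norm_cast at hz
    omega
  have hH : {a ∈ G | θ a = a} = ofReImI '' normOneTorus (p : ℚ_[p]) := by
    subst hi hθ hG
    exact setOf_mul_star_eq_one_fixed_eq_image hp0
  have hσ : θ (star ⟨0, 1, z, 0⟩) = ⟨0, -1, z, 0⟩ := by
    subst hi hθ
    dsimp only
    rw [inv_smul_mk_mul_mul_mk hp0]
    simp
  refine ⟨⟨⟨0, 1, z, 0⟩, ?_, ?_⟩, fun t _ ht => Padic.exists_eq_sq_or_eq_neg_p_mul_sq hp2 ht,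
    Padic.not_exists_neg_p_eq_sq, 0, 1, by ring⟩
  · exact hG ▸ (mk_zero_one_mul_star_eq_one_iff z).2 (by linear_combination hz)
  rw [setOf_fixed_mul_mul_fixed_eq_doubleCoset, hH]
  refine ⟨isClosed_doubleCoset_image_ofReImI _, fun hstable => ?_⟩
  have hg := mem_doubleCoset_self_of_one_mem (⟨0, 1, z, 0⟩ : ℍ[ℚ_[p], p, -1])
    one_mem_image_ofReImI one_mem_image_ofReImI
  have hσg := hstable ▸ Set.mem_image_of_mem (fun a => θ (star a)) hg
  rw [hσ] at hσg
  exact mk_neg_notMem_doubleCoset hp0 hz0 Padic.not_exists_neg_p_eq_sq hσg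

end
end
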